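/- Let g ≥ 2 and l ≥ 1 be natural numbers and let X be a real number. Let μ : ℕ → ℝ satisfy μ(l+1) = 0 and μ(i) ≥ μ(i+1) for 1 ≤ i ≤ l; let r : ℕ → ℝ satisfy r(1) ≥ 1, r(i+1) ≥ r(i) + 1 for 1 ≤ i ≤ l−1, and r(l) = g; let dd : ℕ → ℝ satisfy dd(i) ≥ 2·r(i) − 2 for 1 ≤ i ≤ l, with dd(l+1) = dd(l) = 2g − 2. Assume X ≥ Σ_{i=1}^{l} (dd(i) + dd(i+1))·(μ(i) − μ(i+1)) and X ≥ (dd(1) + dd(l))·(μ(1) − μ(l)) + 2·dd(l)·μ(l). Then X ≥ (4(g−1)/g) · Σ_{i=1}^{l} r(i)·(μ(i) − μ(i+1)). -/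

import Mathlib

/-!
Multiply the first Xiao inequality by `g - 1` and add the second. Writing `εᵢ = μᵢ - μᵢ₊₁ ≥ 0`,
the result is a nonnegative combination of the `εᵢ` whose coefficient at `i < l` is
`(g - 1)(dᵢ + dᵢ₊₁) + d₁ + d_l ≥ (g - 1)(4rᵢ - 2) + 2g - 2 = 4(g - 1)rᵢ` by Clifford (`dᵢ ≥ 2rᵢ - 2`,
`dᵢ₊₁ ≥ 2rᵢ₊₁ - 2 ≥ 2rᵢ`, `d₁ ≥ 0`), and at `i = l` is exactly `4(g - 1)g = 4(g - 1)r_l`.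
Hence `g X ≥ 4(g - 1) Σ rᵢ εᵢ`.
-/

open Finset

theorem Finset.sum_Icc_one_sub_succ {M : Type*} [AddCommGroup M] (f : ℕ → M) (n : ℕ) :
    ∑ i ∈ Icc 1 n, (f i - f (i + 1)) = f 1 - f (n + 1) := by
  rw [← Ico_add_one_right_eq_Icc, ← neg_sub, ← sum_Ico_sub f (by omega : 1 ≤ n + 1),
    ← sum_neg_distrib]
  simp only [neg_sub]

theorem four_mul_le_of_clifford {g r r' d d' c : ℝ} (hg : 1 ≤ g) (hd : 2 * r - 2 ≤ d)
    (hd' : 2 * r' - 2 ≤ d') (hr : r + 1 ≤ r') (hc : 0 ≤ c) :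
    4 * (g - 1) * r ≤ (g - 1) * (d + d') + (c + (2 * g - 2)) := by
  nlinarith

theorem four_mul_sum_le_xiao_combination (m : ℕ) {g : ℝ} (hg : 1 ≤ g) (μ r dd : ℕ → ℝ)
    (hμl : μ (m + 1 + 1) = 0) (hμ : ∀ i ∈ Icc 1 (m + 1), μ (i + 1) ≤ μ i)
    (hr1 : 1 ≤ r 1) (hr : ∀ i ∈ Icc 1 m, r i + 1 ≤ r (i + 1)) (hrl : r (m + 1) = g)
    (hdd : ∀ i ∈ Icc 1 (m + 1), 2 * r i - 2 ≤ dd i)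
    (hddl1 : dd (m + 1 + 1) = dd (m + 1)) (hddl : dd (m + 1) = 2 * g - 2) :
    4 * (g - 1) * ∑ i ∈ Icc 1 (m + 1), r i * (μ i - μ (i + 1)) ≤
      (g - 1) * ∑ i ∈ Icc 1 (m + 1), (dd i + dd (i + 1)) * (μ i - μ (i + 1)) +
        ((dd 1 + dd (m + 1)) * (μ 1 - μ (m + 1)) + 2 * dd (m + 1) * μ (m + 1)) := by
  have hsub : Icc 1 m ⊆ Icc 1 (m + 1) := Icc_subset_Icc_right (by omega)
  have hd1 : 0 ≤ dd 1 := by linarith [hdd 1 (by simp)]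
  have hlower : 4 * (g - 1) * ∑ i ∈ Icc 1 m, r i * (μ i - μ (i + 1)) ≤
      (g - 1) * ∑ i ∈ Icc 1 m, (dd i + dd (i + 1)) * (μ i - μ (i + 1)) +
        (dd 1 + dd (m + 1)) * ∑ i ∈ Icc 1 m, (μ i - μ (i + 1)) := by
    rw [mul_sum, mul_sum, mul_sum, ← sum_add_distrib]
    refine sum_le_sum fun i hi => ?_
    have hi' : i + 1 ∈ Icc 1 (m + 1) := by simp only [mem_Icc] at hi ⊢; omega
    have hclifford := four_mul_le_of_clifford hg (hdd i (hsub hi)) (hdd (i + 1) hi')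
      (hr i hi) hd1
    rw [← hddl] at hclifford
    have hε := sub_nonneg.2 (hμ i (hsub hi))
    linarith [mul_le_mul_of_nonneg_right hclifford hε]
  rw [← sum_Icc_one_sub_succ, sum_Icc_succ_top (by omega), sum_Icc_succ_top (by omega), hμl,
    hddl1, hrl, hddl]
  rw [hddl] at hlower
  linarith

/-- Arithmetic skeleton of the slope inequality for fibred surfaces via Xiao's
method. -/
theorem stmt_6 (g l : ℕ) (hg : 2 ≤ g) (hl : 1 ≤ l) (X : ℝ)
    (μ r dd : ℕ → ℝ)
    (hμl : μ (l + 1) = 0)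
    (hμ : ∀ i, 1 ≤ i → i ≤ l → μ i ≥ μ (i + 1))
    (hr1 : r 1 ≥ 1)
    (hr : ∀ i, 1 ≤ i → i ≤ l - 1 → r (i + 1) ≥ r i + 1)
    (hrl : r l = (g : ℝ))
    (hdd : ∀ i, 1 ≤ i → i ≤ l → dd i ≥ 2 * r i - 2)
    (hddl1 : dd (l + 1) = dd l)
    (hddl : dd l = 2 * (g : ℝ) - 2)
    (hX1 : X ≥ ∑ i ∈ Finset.Icc 1 l, (dd i + dd (i + 1)) * (μ i - μ (i + 1)))
    (hX2 : X ≥ (dd 1 + dd l) * (μ 1 - μ l) + 2 * dd l * μ l) :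
    X ≥ (4 * ((g : ℝ) - 1) / g) *
      ∑ i ∈ Finset.Icc 1 l, r i * (μ i - μ (i + 1)) := by
  obtain ⟨m, rfl⟩ : ∃ m, l = m + 1 := ⟨l - 1, by omega⟩
  have hg0 : (0 : ℝ) < g := Nat.cast_pos.2 (by omega)
  have hg1 : (1 : ℝ) ≤ g := Nat.one_le_cast.2 (by omega)
  have hcomb := four_mul_sum_le_xiao_combination m hg1 μ r dd hμl
    (fun i hi => hμ i (mem_Icc.1 hi).1 (mem_Icc.1 hi).2) hr1
    (fun i hi => hr i (mem_Icc.1 hi).1 (by simpa using (mem_Icc.1 hi).2)) hrl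
    (fun i hi => hdd i (mem_Icc.1 hi).1 (mem_Icc.1 hi).2) hddl1 hddl
  rw [ge_iff_le, div_mul_eq_mul_div, div_le_iff₀ hg0]
  linarith [mul_le_mul_of_nonneg_left hX1 (sub_nonneg.2 hg1)]
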